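/- arXiv:1301.4767 — 3 statements merged into one kernel-verified Lean document; each statement's English description precedes it below -/
import Mathlib

section
/- Let a tree T of height greater than k be repeatedly split by removing subtrees of height exactly k (with possibly one final subtree of smaller height). Then every resulting subtree has diameter at most 2k, every subtree of height k contains at least k+1 vertices, and the number of subtrees produced is at most (|V_T|−1)/(k+1) + 1. -/
/-- A rooted subtree on vertex set `S` (of the ambient graph `T`) has height at most `k`:
there is a root `ρ ∈ S` such that every vertex of `S` is within distance `k` of `ρ` inside
the induced subgraph. -/
def subtreeHeightLE {V : Type} (T : SimpleGraph V) (S : Finset V) (k : ℕ) : Prop :=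
  ∃ (ρ : V) (hρ : ρ ∈ (S : Set V)),
    ∀ v (hv : v ∈ (S : Set V)), (T.induce (S : Set V)).dist ⟨ρ, hρ⟩ ⟨v, hv⟩ ≤ k

/-- A rooted subtree on vertex set `S` has height exactly `k`. -/
def subtreeHeightEq {V : Type} (T : SimpleGraph V) (S : Finset V) (k : ℕ) : Prop :=
  ∃ (ρ : V) (hρ : ρ ∈ (S : Set V)),
    (∀ v (hv : v ∈ (S : Set V)), (T.induce (S : Set V)).dist ⟨ρ, hρ⟩ ⟨v, hv⟩ ≤ k) ∧
    (∃ (v : V) (hv : v ∈ (S : Set V)), (T.induce (S : Set V)).dist ⟨ρ, hρ⟩ ⟨v, hv⟩ = k)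

/-- Let a tree `T` be split into vertex-disjoint connected subtrees (`parts`),
each of height at most `k`, all of height exactly `k` except possibly one. Then every
resulting subtree has diameter at most `2k`, every subtree of height `k` contains at least
`k+1` vertices, and the number of subtrees produced is at most `(|V_T|−1)/(k+1) + 1`. -/
theorem treelet_splitting {V : Type} [Fintype V] [DecidableEq V]
    (T : SimpleGraph V) (hT : T.IsTree) (k : ℕ) (hk : 1 ≤ k)
    (parts : Finset (Finset V))
    (hcover : ∀ v : V, ∃ S ∈ parts, v ∈ S)
    (hdisj : ∀ S ∈ parts, ∀ S' ∈ parts, S ≠ S' → Disjoint S S')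
    (hne : ∀ S ∈ parts, S.Nonempty)
    (hconn : ∀ S ∈ parts, (T.induce (S : Set V)).Connected)
    (hheight : ∀ S ∈ parts, subtreeHeightLE T S k)
    (hallbutone : ∀ S ∈ parts, ∀ S' ∈ parts, S ≠ S' →
      subtreeHeightEq T S k ∨ subtreeHeightEq T S' k) :
    (∀ S ∈ parts, ∀ u (hu : u ∈ (S : Set V)), ∀ v (hv : v ∈ (S : Set V)),
        (T.induce (S : Set V)).dist ⟨u, hu⟩ ⟨v, hv⟩ ≤ 2 * k) ∧
    (∀ S ∈ parts, subtreeHeightEq T S k → k + 1 ≤ S.card) ∧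
    ((parts.card : ℝ) ≤ ((Fintype.card V : ℝ) - 1) / (k + 1) + 1) := by
  classical
  -- Part 2 first, as it is used in part 3.
  have part2 : ∀ S ∈ parts, subtreeHeightEq T S k → k + 1 ≤ S.card := by
    intro S hS ⟨ρ, hρ, _, v, hv, hdist⟩
    obtain ⟨p, hp⟩ :=
      ((hconn S hS) ⟨ρ, hρ⟩ ⟨v, hv⟩).exists_walk_length_eq_dist
    have hb : k ≤ p.bypass.length := by
      have := SimpleGraph.dist_le p.bypass
      omega
    have hlt : p.bypass.length < Fintype.card (S : Set V) :=
      p.bypass_isPath.length_lt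
    have hcard : Fintype.card (S : Set V) = S.card := by
      simp
    omega
  refine ⟨?_, part2, ?_⟩
  · intro S hS u hu v hv
    obtain ⟨ρ, hρ, hall⟩ := hheight S hS
    calc (T.induce (S : Set V)).dist ⟨u, hu⟩ ⟨v, hv⟩
        ≤ (T.induce (S : Set V)).dist ⟨u, hu⟩ ⟨ρ, hρ⟩
          + (T.induce (S : Set V)).dist ⟨ρ, hρ⟩ ⟨v, hv⟩ :=
          (hconn S hS).dist_triangle
      _ ≤ k + k := by
          have h1 := hall u hu
          have h2 := hall v hv
          rw [SimpleGraph.dist_comm] at h1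
          omega
      _ = 2 * k := by ring
  · -- counting
    set A := parts.filter (fun S => subtreeHeightEq T S k) with hA
    set B := parts \ A with hB
    have hBcard : B.card ≤ 1 := by
      rw [Finset.card_le_one]
      intro S hS S' hS'
      simp only [hB, hA, Finset.mem_sdiff, Finset.mem_filter] at hS hS'
      by_contra hne'
      rcases hallbutone S hS.1 S' hS'.1 hne' with h | h
      · exact hS.2 ⟨hS.1, h⟩
      · exact hS'.2 ⟨hS'.1, h⟩
    have hsum : ∑ S ∈ parts, S.card = Fintype.card V := by
      have huniv : parts.biUnion id = Finset.univ := by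
        ext v
        simp only [Finset.mem_biUnion, Finset.mem_univ, iff_true, id]
        exact hcover v
      have := Finset.card_biUnion (t := id) (s := parts)
        (fun S hS S' hS' h => hdisj S hS S' hS' h)
      rw [huniv, Finset.card_univ] at this
      simpa using this.symm
    have hAsub : A ⊆ parts := Finset.filter_subset _ _
    have hAB : A.card + B.card = parts.card := by
      rw [hB, Finset.card_sdiff_of_subset hAsub]
      have := Finset.card_le_card hAsub
      omega
    have hlow : A.card * (k + 1) + B.card ≤ Fintype.card V := by
      rw [← hsum]
      have hsplit : parts = A ∪ B := by
        rw [hB, Finset.union_sdiff_of_subset hAsub]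
      rw [hsplit, Finset.sum_union (Finset.sdiff_disjoint.symm)]
      gcongr ?_ + ?_
      · calc A.card * (k + 1) = ∑ _S ∈ A, (k + 1) := by
              rw [Finset.sum_const, smul_eq_mul]
          _ ≤ ∑ S ∈ A, S.card := by
              apply Finset.sum_le_sum
              intro S hS
              simp only [hA, Finset.mem_filter] at hS
              exact part2 S hS.1 hS.2
      · calc B.card = ∑ _S ∈ B, 1 := by simp
          _ ≤ ∑ S ∈ B, S.card := by
              apply Finset.sum_le_sum
              intro S hS
              simp only [hB, Finset.mem_sdiff] at hS
              exact Finset.card_pos.mpr (hne S hS.1)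
    -- key nat inequality: parts.card * (k+1) ≤ Fintype.card V + k
    have hkey : parts.card * (k + 1) ≤ Fintype.card V + k := by
      calc parts.card * (k + 1) = A.card * (k + 1) + B.card * (k + 1) := by
            rw [← hAB]; ring
        _ ≤ (A.card * (k + 1) + B.card) + B.card * k := by ring_nf; omega
        _ ≤ Fintype.card V + 1 * k := by
            have : B.card * k ≤ 1 * k := Nat.mul_le_mul_right k hBcard
            omega
        _ = Fintype.card V + k := by ring
    have hkpos : (0 : ℝ) < (k : ℝ) + 1 := by positivity
    rw [div_add' _ _ _ (ne_of_gt hkpos), le_div_iff₀ hkpos]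
    have : ((parts.card : ℝ)) * ((k : ℝ) + 1) ≤ (Fintype.card V : ℝ) + k := by
      exact_mod_cast hkey
    linarith
end

section
/- Let (z₁, …, z_m) be positive integers with z₁ + ⋯ + z_m = n. Then Σ_{j=1}^m min{z_j², n} ≤ n^{3/2}. -/
/-! Each term satisfies `min (z², n) ≤ z √n` (compare `z` with `√n`), so summing and using
`∑ z = n` gives `n √n = n ^ (3/2)`. -/

open Finset

lemma min_sq_sq_le_mul {R : Type*} [Semiring R] [LinearOrder R] [IsOrderedRing R] {x s : R}
    (hx : 0 ≤ x) (hs : 0 ≤ s) : min (x ^ 2) (s ^ 2) ≤ x * s := by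
  rcases le_total x s with h | h
  · exact (min_le_left _ _).trans (by rw [sq]; exact mul_le_mul_of_nonneg_left h hx)
  · exact (min_le_right _ _).trans (by rw [sq]; exact mul_le_mul_of_nonneg_right h hs)

lemma cast_min_sq_le_mul_sqrt (a n : ℕ) : ((min (a ^ 2) n : ℕ) : ℝ) ≤ a * √n := by
  have h := min_sq_sq_le_mul (a.cast_nonneg (α := ℝ)) (Real.sqrt_nonneg n)
  rw [Real.sq_sqrt n.cast_nonneg] at h
  exact_mod_cast h

lemma Real.mul_sqrt_eq_rpow_three_halves {x : ℝ} (hx : 0 ≤ x) : x * √x = x ^ (3 / 2 : ℝ) := by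
  rw [Real.sqrt_eq_rpow, ← Real.rpow_one_add' hx (by norm_num)]
  norm_num

theorem sum_min_sq_le_rpow_general (n m : ℕ) (z : Fin m → ℕ)
    (hsum : ∑ j, z j = n) :
    ((∑ j, min ((z j) ^ 2) n : ℕ) : ℝ) ≤ (n : ℝ) ^ (3 / 2 : ℝ) :=
  calc ((∑ j, min ((z j) ^ 2) n : ℕ) : ℝ)
      = ∑ j, ((min ((z j) ^ 2) n : ℕ) : ℝ) := Nat.cast_sum _ _
    _ ≤ ∑ j, (z j : ℝ) * √n := sum_le_sum fun j _ => cast_min_sq_le_mul_sqrt (z j) n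
    _ = n * √n := by rw [← sum_mul, ← Nat.cast_sum, hsum]
    _ = (n : ℝ) ^ (3 / 2 : ℝ) := Real.mul_sqrt_eq_rpow_three_halves n.cast_nonneg

/-- Let `z₁, …, z_m` be positive integers with `z₁ + ⋯ + z_m = n`. Then
`Σ_{j=1}^m min{z_j², n} ≤ n^{3/2}`. -/
theorem sum_min_sq_le_rpow (n m : ℕ) (z : Fin m → ℕ)
    (hpos : ∀ j, 0 < z j) (hsum : ∑ j, z j = n) :
    ((∑ j, min ((z j) ^ 2) n : ℕ) : ℝ) ≤ (n : ℝ) ^ (3 / 2 : ℝ) :=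
  sum_min_sq_le_rpow_general n m z hsum
end

section
/- If a leaf q of a star S_j (extracted as the star centered at a maximum-degree vertex among remaining vertices) were connected to more than |V_{S_j}|−1 vertices not previously included in any star, the extraction procedure would have returned a star centered at q instead; hence each star S_j is connected to at most |V_{S_j}|² stars created later. -/
open Finset

/-- In the greedy star extraction (the `j`-th star `S j` is centered at a
vertex `ctr j` of maximum degree among the vertices not covered by earlier stars, and
consists of that center together with its uncovered neighbors), no vertex of `S j` can be
connected to more than `|S j| − 1` vertices uncovered at step `j` (otherwise the procedure
would have returned a star centered there instead); hence each star `S j` is connected to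
at most `|S j|²` stars created later. -/
theorem greedy_star_later_connections {V : Type} [Fintype V] [DecidableEq V]
    (G : SimpleGraph V) [DecidableRel G.Adj]
    (m : ℕ) (S : Fin m → Finset V) (ctr : Fin m → V)
    (hdisj : ∀ i j, i ≠ j → Disjoint (S i) (S j))
    (hcover : ∀ v : V, ∃ j, v ∈ S j)
    (hctr : ∀ j, ctr j ∉ (Finset.univ.filter (· < j)).biUnion S)
    (hstar : ∀ j, S j =
      insert (ctr j) (G.neighborFinset (ctr j) \ (Finset.univ.filter (· < j)).biUnion S))
    (hmax : ∀ j, ∀ v, v ∉ (Finset.univ.filter (· < j)).biUnion S →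
      (G.neighborFinset v \ (Finset.univ.filter (· < j)).biUnion S).card
        ≤ (G.neighborFinset (ctr j) \ (Finset.univ.filter (· < j)).biUnion S).card) :
    (∀ j, ∀ q ∈ S j,
      (G.neighborFinset q \ (Finset.univ.filter (· < j)).biUnion S).card ≤ (S j).card - 1) ∧
    (∀ j, (Finset.univ.filter
        (fun j' => j < j' ∧ ∃ u ∈ S j, ∃ v ∈ S j', G.Adj u v)).card ≤ (S j).card ^ 2) := by
  classical
  have key : ∀ j, ∀ q ∈ S j,
      (G.neighborFinset q \ (Finset.univ.filter (· < j)).biUnion S).card ≤ (S j).card - 1 := by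
    intro j q hq
    set U := (Finset.univ.filter (· < j)).biUnion S with hU
    have hqU : q ∉ U := by
      rw [hstar j] at hq
      rcases Finset.mem_insert.mp hq with h | h
      · rw [h]; exact hctr j
      · exact (Finset.mem_sdiff.mp h).2
    have h1 := hmax j q hqU
    rw [← hU] at h1
    have hcard : (S j).card = (G.neighborFinset (ctr j) \ U).card + 1 := by
      rw [hstar j, Finset.card_insert_of_notMem]
      simp [Finset.mem_sdiff]
    omega
  refine ⟨key, ?_⟩
  intro j
  set U := (Finset.univ.filter (· < j)).biUnion S with hU
  set T := (S j).biUnion (fun u => G.neighborFinset u \ U) with hT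
  set F := Finset.univ.filter
      (fun j' => j < j' ∧ ∃ u ∈ S j, ∃ v ∈ S j', G.Adj u v) with hF
  have hmem : ∀ j' ∈ F, ∃ v, v ∈ S j' ∧ ∃ u ∈ S j, G.Adj u v := by
    intro j' hj'
    obtain ⟨_, u, hu, v, hv, huv⟩ := (Finset.mem_filter.mp hj').2
    exact ⟨v, hv, u, hu, huv⟩
  set f : Fin m → V := fun j' =>
    if h : ∃ v, v ∈ S j' ∧ ∃ u ∈ S j, G.Adj u v then h.choose else ctr j' with hf
  have hfS : ∀ j' ∈ F, f j' ∈ S j' := by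
    intro j' hj'
    have h := hmem j' hj'
    simp only [hf, dif_pos h]
    exact h.choose_spec.1
  have hcard1 : F.card ≤ T.card := by
    apply Finset.card_le_card_of_injOn f
    · intro j' hj'
      have h := hmem j' hj'
      have hlt : j < j' := (Finset.mem_filter.mp hj').2.1
      simp only [hf, dif_pos h]
      obtain ⟨hv, u, hu, huv⟩ := h.choose_spec
      refine Finset.mem_biUnion.mpr ⟨u, hu, ?_⟩
      rw [Finset.mem_sdiff]
      constructor
      · exact SimpleGraph.mem_neighborFinset _ _ _ |>.mpr huv
      · intro hmemU
        obtain ⟨k, hk, hvk⟩ := Finset.mem_biUnion.mp hmemU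
        have hkj : k < j := (Finset.mem_filter.mp hk).2
        have : k ≠ j' := by
          intro h; rw [h] at hkj; exact absurd hlt (not_lt.mpr hkj.le)
        exact Finset.disjoint_left.mp (hdisj k j' this) hvk hv
    · intro a ha b hb hab
      by_contra hne
      exact Finset.disjoint_left.mp (hdisj a b hne) (hfS a ha) (hab ▸ hfS b hb)
  have hcard2 : T.card ≤ (S j).card * ((S j).card - 1) := by
    calc T.card ≤ ∑ u ∈ S j, (G.neighborFinset u \ U).card := Finset.card_biUnion_le
    _ ≤ ∑ _u ∈ S j, ((S j).card - 1) := Finset.sum_le_sum (fun u hu => key j u hu)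
    _ = (S j).card * ((S j).card - 1) := by rw [Finset.sum_const, smul_eq_mul]
  have : (S j).card * ((S j).card - 1) ≤ (S j).card ^ 2 := by
    have := Nat.sub_le (S j).card 1
    calc (S j).card * ((S j).card - 1) ≤ (S j).card * (S j).card :=
      Nat.mul_le_mul_left _ this
    _ = (S j).card ^ 2 := (sq _).symm
  omega
end
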